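/- arXiv:math/0208008 — 2 statements merged into one kernel-verified Lean document; each statement's English description precedes it below -/
import Mathlib

section
/- Let k ⊂ ℂ be a CM field with complex conjugation c, p a rational prime, and let S, M and the x_𝔭 be as in the context; set ξ_𝔭 = c(x_𝔭)·x_𝔭^{-1} (so |ξ_𝔭| = 1 under the fixed embedding). For each 𝔭 ∈ S let θ_𝔭 ∈ ℝ be an argument of ξ_𝔭, i.e. ξ_𝔭 = e^{iθ_𝔭}. Then for any integers (a_𝔭)_{𝔭∈S}, not all zero, the real number ∑_{𝔭∈S} a_𝔭·θ_𝔭 does not lie in 2π·ℚ. In particular the classes of the θ_𝔭 in ℝ/2πℚ are ℚ-linearly independent. -/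
/-!
Put `ξ = ∏_{𝔭 ∈ S} ξ_𝔭 ^ a_𝔭 ∈ k`. If `∑ a_𝔭 θ_𝔭 = 2πρ` with `ρ ∈ ℚ`, then `ξ ^ den ρ = 1`, so
`ξ` has valuation `1` at every prime. Now pick `𝔭₀ ∈ S` with `a_𝔭₀ ≠ 0`. For `𝔭 ∈ S` the
conjugate `c(x_𝔭) = x_{c(𝔭)}` is a `𝔭₀`-unit, because `c(𝔭) ∉ S`, and so is `x_𝔭` for `𝔭 ≠ 𝔭₀`;
hence the `𝔭₀`-adic valuation of `ξ` is that of `x_𝔭₀ ^ (-a_𝔭₀)`, which is not `1` since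
`𝔭₀ ∣ (x_𝔭₀)`.
-/

open NumberField IsDedekindDomain IntermediateField

noncomputable section

/-- Membership in `E_p(k)`: `x ≠ 0`, `ord_v x = 0` (i.e. `v`-adic valuation `1`) for every
finite place `v` not dividing `p`, and `|σ x| = 1` for every complex embedding `σ`. -/
def IsEp (k : Type*) [Field k] [NumberField k] (p : ℕ) (x : k) : Prop :=
  x ≠ 0 ∧
  (∀ v : HeightOneSpectrum (𝓞 k), (p : 𝓞 k) ∉ v.asIdeal → v.valuation k x = 1) ∧
  (∀ σ : k →+* ℂ, ‖σ x‖ = 1)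

open Classical in
/-- `ord_v(x) ∈ ℤ`, the `v`-adic order of `x ∈ k`. -/
def ordAt {k : Type*} [Field k] [NumberField k] (v : HeightOneSpectrum (𝓞 k)) (x : k) : ℤ :=
  if h : x = 0 then 0
  else - Multiplicative.toAdd (WithZero.unzero (((v.valuation k).ne_zero_iff).mpr h))

/-- The image of a prime `v` of `k` under a field automorphism `σ` of `k`. -/
def primeMap {k : Type*} [Field k] [NumberField k] (σ : k ≃ₐ[ℚ] k)
    (v : HeightOneSpectrum (𝓞 k)) : HeightOneSpectrum (𝓞 k) where
  asIdeal := Ideal.comap (RingOfIntegers.mapRingEquiv σ.toRingEquiv).symm.toRingHom v.asIdeal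
  isPrime := v.isPrime.comap _
  ne_bot := fun h => v.ne_bot (by
    have h2 := Ideal.map_comap_of_surjective
      (RingOfIntegers.mapRingEquiv σ.toRingEquiv).symm.toRingHom
      (RingOfIntegers.mapRingEquiv σ.toRingEquiv).symm.surjective v.asIdeal
    rw [h, Ideal.map_bot] at h2
    exact h2.symm)

/-- The inertia degree `f(v|p)` of a prime `v` of `k` over the rational prime `p`. -/
def fdeg {k : Type*} [Field k] [NumberField k] (p : ℕ) (v : HeightOneSpectrum (𝓞 k)) : ℕ :=
  Ideal.inertiaDeg' (Ideal.span {(p : ℤ)}) v.asIdeal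

/-- A totally real field: every complex embedding has real image. -/
def IsTotallyRealField (F : Type*) [Field F] : Prop :=
  ∀ (σ : F →+* ℂ) (x : F), (σ x).im = 0

/-- A CM field: a totally imaginary quadratic extension of a totally real field. -/
def IsCMField (F : Type*) [Field F] : Prop :=
  (∀ σ : F →+* ℂ, ∃ x : F, (σ x).im ≠ 0) ∧
  ∃ F₀ : Subfield F, IsTotallyRealField F₀ ∧ Module.finrank F₀ F = 2



namespace IsDedekindDomain.HeightOneSpectrum

variable {R : Type*} [CommRing R] [IsDedekindDomain R] (K : Type*) [Field K] [Algebra R K]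
  [IsFractionRing R K] {v w : HeightOneSpectrum R} {r : R} {e : ℕ}

theorem valuation_eq_one_of_span_eq_pow (hwv : w ≠ v) (h : Ideal.span {r} = w.asIdeal ^ e) :
    v.valuation K (algebraMap R K r) = 1 := by
  rw [valuation_of_algebraMap]
  refine le_antisymm (v.intValuation_le_one r) (not_lt.mp fun hlt => hwv ?_)
  have hvw : v.asIdeal ∣ w.asIdeal :=
    v.prime.dvd_of_dvd_pow (h ▸ (v.intValuation_lt_one_iff_dvd r).mp hlt)
  exact HeightOneSpectrum.ext (w.isMaximal.eq_of_le v.isPrime.ne_top (Ideal.le_of_dvd hvw))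

theorem valuation_lt_one_of_span_eq_pow (he : e ≠ 0) (h : Ideal.span {r} = v.asIdeal ^ e) :
    v.valuation K (algebraMap R K r) < 1 := by
  rw [valuation_of_algebraMap]
  exact (v.intValuation_lt_one_iff_dvd r).mpr (h ▸ dvd_pow_self _ he)

end IsDedekindDomain.HeightOneSpectrum

section primeMap

variable {k : Type*} [Field k] [NumberField k]

theorem primeMap_injective (σ : k ≃ₐ[ℚ] k) : Function.Injective (primeMap σ) := fun _ _ h =>
  HeightOneSpectrum.ext <| Ideal.comap_injective_of_surjective _
    (RingOfIntegers.mapRingEquiv σ.toRingEquiv).symm.surjective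
    (congrArg HeightOneSpectrum.asIdeal h)

theorem natCast_mem_primeMap_iff (σ : k ≃ₐ[ℚ] k) (v : HeightOneSpectrum (𝓞 k)) (n : ℕ) :
    (n : 𝓞 k) ∈ (primeMap σ v).asIdeal ↔ (n : 𝓞 k) ∈ v.asIdeal := by
  change _ ∈ Ideal.comap _ _ ↔ _
  rw [Ideal.mem_comap, map_natCast]

end primeMap

open Complex in
theorem prod_zpow_pow_den_eq_one {K ι : Type*} [Field K] (φ : K →+* ℂ) {S : Finset ι}
    {ξ : ι → K} {θ : ι → ℝ} (hξ : ∀ i ∈ S, φ (ξ i) = exp (θ i * I)) (a : ι → ℤ) {ρ : ℚ}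
    (hρ : ∑ i ∈ S, (a i : ℝ) * θ i = 2 * Real.pi * ρ) :
    (∏ i ∈ S, ξ i ^ a i) ^ ρ.den = 1 := by
  apply φ.injective
  have hprod : φ (∏ i ∈ S, ξ i ^ a i) = exp ((∑ i ∈ S, (a i : ℝ) * θ i : ℝ) * I) := by
    rw [map_prod, ofReal_sum, Finset.sum_mul, exp_sum]
    refine Finset.prod_congr rfl fun i hi => ?_
    rw [map_zpow₀, hξ i hi, ← exp_int_mul, ofReal_mul, ofReal_intCast, mul_assoc]
  rw [map_pow, map_one, hprod, hρ, ← exp_nat_mul]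
  convert exp_int_mul_two_pi_mul_I ρ.num using 2
  push_cast [Rat.cast_def]
  field_simp

theorem statement10_general (k : Subfield ℂ) [NumberField ↥k]
    (c : ↥k ≃ₐ[ℚ] ↥k)
    (p : ℕ)
    (T : Finset (HeightOneSpectrum (𝓞 ↥k)))
    (hT : ∀ v, v ∈ T ↔ ((p : 𝓞 ↥k) ∈ v.asIdeal ∧ primeMap c v ≠ v))
    (M : ℕ) (hM : 0 < M) (hMf : ∀ v ∈ T, fdeg p v ∣ M)
    (x : HeightOneSpectrum (𝓞 ↥k) → 𝓞 ↥k)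
    (hxgen : ∀ v ∈ T, Ideal.span {x v} = v.asIdeal ^ (M / fdeg p v))
    (hxc : ∀ v ∈ T, c ((x v : ↥k)) = ((x (primeMap c v) : ↥k)))
    (S : Finset (HeightOneSpectrum (𝓞 ↥k))) (hST : ∀ v ∈ S, v ∈ T)
    (hSrep : ∀ v ∈ T, (v ∈ S ↔ primeMap c v ∉ S))
    (θ : HeightOneSpectrum (𝓞 ↥k) → ℝ)
    (hθ : ∀ v ∈ S, ((c ((x v : ↥k)) * ((x v : ↥k))⁻¹ : ↥k) : ℂ) = Complex.exp (θ v * Complex.I))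
    (a : HeightOneSpectrum (𝓞 ↥k) → ℤ) (ha : ∃ v ∈ S, a v ≠ 0) :
    ¬ ∃ ρ : ℚ, (∑ v ∈ S, (a v : ℝ) * θ v) = 2 * Real.pi * ρ := by
  rintro ⟨ρ, hρ⟩
  obtain ⟨v₀, hv₀S, ha₀⟩ := ha
  have hv₀T := hST v₀ hv₀S
  have hval₀ : v₀.valuation k (x v₀) ≠ 1 :=
    (HeightOneSpectrum.valuation_lt_one_of_span_eq_pow k
      (Nat.div_pos (Nat.le_of_dvd hM (hMf v₀ hv₀T)) (Nat.pos_of_dvd_of_pos (hMf v₀ hv₀T) hM)).ne'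
      (hxgen v₀ hv₀T)).ne
  have hval_ne : ∀ v ∈ T, v ≠ v₀ → v₀.valuation k (x v) = 1 := fun v hv hne =>
    HeightOneSpectrum.valuation_eq_one_of_span_eq_pow k hne (hxgen v hv)
  have hval_conj : ∀ v ∈ S, v₀.valuation k (c (x v)) = 1 := fun v hv => by
    obtain ⟨hpv, hcv⟩ := (hT v).mp (hST v hv)
    have hcT : primeMap c v ∈ T :=
      (hT _).mpr ⟨(natCast_mem_primeMap_iff c v p).mpr hpv, (primeMap_injective c).ne hcv⟩
    rw [hxc v (hST v hv)]
    exact hval_ne _ hcT fun h => (hSrep v (hST v hv)).mp hv (h ▸ hv₀S)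
  have hξ_val : v₀.valuation k (∏ v ∈ S, (c (x v) * (x v : k)⁻¹) ^ a v) =
      v₀.valuation k (x v₀) ^ (-a v₀) := by
    rw [map_prod, Finset.prod_eq_single_of_mem v₀ hv₀S]
    · rw [map_zpow₀, map_mul, map_inv₀, hval_conj v₀ hv₀S, one_mul, inv_zpow, zpow_neg]
    · intro v hv hne
      rw [map_zpow₀, map_mul, map_inv₀, hval_conj v hv, hval_ne v (hST v hv) hne, inv_one,
        one_mul, one_zpow]
  have hroot := congrArg (v₀.valuation k)
    (prod_zpow_pow_den_eq_one k.subtype (ξ := fun v => c (x v) * (x v : k)⁻¹) hθ a hρ)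
  rw [map_pow, hξ_val, map_one, ← zpow_natCast, ← zpow_mul,
    zpow_eq_one_iff_right₀ zero_le hval₀] at hroot
  exact mul_ne_zero (neg_ne_zero.mpr ha₀) (Int.natCast_ne_zero.mpr ρ.den_nz) hroot

set_option synthInstance.maxHeartbeats 1000000 in
/-- With `ξ_𝔭 = c(x_𝔭)·x_𝔭⁻¹` and `θ_𝔭` an argument of `ξ_𝔭`, for any
integers `a_𝔭` (𝔭 ∈ S), not all zero, the number `∑_{𝔭∈S} a_𝔭·θ_𝔭` does not lie in `2π·ℚ`;
in particular the classes of the `θ_𝔭` in `ℝ/2πℚ` are `ℚ`-linearly independent. -/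
theorem statement10 (k : Subfield ℂ) [NumberField ↥k] (hk : _root_.IsCMField ↥k)
    (c : ↥k ≃ₐ[ℚ] ↥k) (hc : ∀ (φ : ↥k →+* ℂ) (y : ↥k), φ (c y) = (starRingEnd ℂ) (φ y))
    (p : ℕ) (hp : p.Prime)
    (T : Finset (HeightOneSpectrum (𝓞 ↥k)))
    (hT : ∀ v, v ∈ T ↔ ((p : 𝓞 ↥k) ∈ v.asIdeal ∧ primeMap c v ≠ v))
    (M : ℕ) (hM : 0 < M) (hMf : ∀ v ∈ T, fdeg p v ∣ M)
    (x : HeightOneSpectrum (𝓞 ↥k) → 𝓞 ↥k)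
    (hxgen : ∀ v ∈ T, Ideal.span {x v} = v.asIdeal ^ (M / fdeg p v))
    (hxc : ∀ v ∈ T, c ((x v : ↥k)) = ((x (primeMap c v) : ↥k)))
    (S : Finset (HeightOneSpectrum (𝓞 ↥k))) (hST : ∀ v ∈ S, v ∈ T)
    (hSrep : ∀ v ∈ T, (v ∈ S ↔ primeMap c v ∉ S))
    (θ : HeightOneSpectrum (𝓞 ↥k) → ℝ)
    (hθ : ∀ v ∈ S, ((c ((x v : ↥k)) * ((x v : ↥k))⁻¹ : ↥k) : ℂ) = Complex.exp (θ v * Complex.I))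
    (a : HeightOneSpectrum (𝓞 ↥k) → ℤ) (ha : ∃ v ∈ S, a v ≠ 0) :
    ¬ ∃ ρ : ℚ, (∑ v ∈ S, (a v : ℝ) * θ v) = 2 * Real.pi * ρ :=
  statement10_general k c p T hT M hM hMf x hxgen hxc S hST hSrep θ hθ a ha

end
end

section
/- Let k be a CM field with complex conjugation c, p a rational prime, and T the set of primes 𝔭 of k above p with c(𝔭) ≠ 𝔭. Assume Aut(k) contains a subgroup H with c ∉ H such that G = ⟨H, c⟩ permutes the primes in T transitively. Fix 𝔭_0 ∈ T, let k' be the fixed field of G and 𝔭'_0 = 𝔭_0 ∩ k'. Then T is exactly the set of primes of k lying above 𝔭'_0. -/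
open NumberField IsDedekindDomain IntermediateField

noncomputable section

/-!
Every `σ ∈ G` fixes `k'`, so transitivity of `G` on `T` puts `T` inside the primes above
`𝔭'_0`. Conversely, a finite group acts transitively on the primes of a ring lying over a
given prime of its invariant subring, so a prime `v` above `𝔭'_0` satisfies `σ v = 𝔭_0` for some
`σ ∈ G`; since `c` commutes with `σ`, `c v = v` would force `c 𝔭_0 = 𝔭_0`.
-/

open scoped Pointwise

theorem Ideal.exists_smul_eq_of_forall_fixed_mem_iff {B G : Type*} [CommRing B] [Group G]
    [Finite G] [MulSemiringAction G B] (P Q : Ideal B) [P.IsPrime] [Q.IsPrime]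
    (h : ∀ b : B, (∀ g : G, g • b = b) → (b ∈ P ↔ b ∈ Q)) : ∃ g : G, Q = g • P := by
  have : Algebra.IsInvariant (FixedPoints.subring B G) B G := ⟨fun b hb => ⟨⟨b, hb⟩, rfl⟩⟩
  refine Algebra.IsInvariant.exists_smul_of_under_eq (FixedPoints.subring B G) B G P Q ?_
  ext ⟨b, hb⟩
  exact h b hb

section primeMap

variable {k : Type*} [Field k] [NumberField k]

theorem primeMap_asIdeal (σ : k ≃ₐ[ℚ] k) (v : HeightOneSpectrum (𝓞 k)) :
    (primeMap σ v).asIdeal = σ • v.asIdeal := by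
  ext y
  rw [Ideal.mem_pointwise_smul_iff_inv_smul_mem]
  rfl

theorem primeMap_comm {σ τ : k ≃ₐ[ℚ] k} (h : Commute σ τ) (v : HeightOneSpectrum (𝓞 k)) :
    primeMap σ (primeMap τ v) = primeMap τ (primeMap σ v) := by
  ext1
  simp only [primeMap_asIdeal, smul_smul, h.eq]

end primeMap

theorem AlgEquiv.commute_of_apply_eq_conj {k : Type*} [Field k] [CharZero k]
    [Algebra.IsAlgebraic ℚ k]
    {c : k ≃ₐ[ℚ] k} (hc : ∀ (φ : k →+* ℂ) (y : k), φ (c y) = (starRingEnd ℂ) (φ y))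
    (σ : k ≃ₐ[ℚ] k) : Commute c σ := by
  let φ : k →+* ℂ := (IsAlgClosed.lift : k →ₐ[ℚ] ℂ).toRingHom
  refine AlgEquiv.ext fun x => φ.injective ?_
  change φ (c (σ x)) = φ (σ (c x))
  rw [hc φ]
  exact (hc (φ.comp σ.toRingHom) x).symm

theorem statement14_general (k : Type*) [Field k] [NumberField k]
    (c : k ≃ₐ[ℚ] k) (hc : ∀ (φ : k →+* ℂ) (y : k), φ (c y) = (starRingEnd ℂ) (φ y))
    (p : ℕ)
    (H : Subgroup (k ≃ₐ[ℚ] k))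
    (htrans : ∀ v w : HeightOneSpectrum (𝓞 k),
        ((p : 𝓞 k) ∈ v.asIdeal ∧ primeMap c v ≠ v) →
        ((p : 𝓞 k) ∈ w.asIdeal ∧ primeMap c w ≠ w) →
        ∃ σ ∈ H ⊔ Subgroup.closure {c}, primeMap σ v = w)
    (v0 : HeightOneSpectrum (𝓞 k))
    (hv0 : (p : 𝓞 k) ∈ v0.asIdeal ∧ primeMap c v0 ≠ v0) :
    ∀ v : HeightOneSpectrum (𝓞 k),
      (((p : 𝓞 k) ∈ v.asIdeal ∧ primeMap c v ≠ v) ↔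
        (∀ y : 𝓞 k, (y : k) ∈ IntermediateField.fixedField (H ⊔ Subgroup.closure {c}) →
          (y ∈ v.asIdeal ↔ y ∈ v0.asIdeal))) := by
  set G := H ⊔ Subgroup.closure {c}
  intro v
  constructor
  · rintro hv y hy
    obtain ⟨σ, hσG, rfl⟩ := htrans v0 v hv0 hv
    have hσy : σ • y = y := RingOfIntegers.ext (hy ⟨σ, hσG⟩)
    rw [primeMap_asIdeal, Ideal.mem_pointwise_smul_iff_inv_smul_mem, inv_smul_eq_iff.2 hσy.symm]
  · intro hv
    have hpv : (p : 𝓞 k) ∈ v.asIdeal := (hv p (IntermediateField.natCast_mem _ p)).2 hv0.1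
    obtain ⟨σ, hσ⟩ := Ideal.exists_smul_eq_of_forall_fixed_mem_iff (G := G) v.asIdeal v0.asIdeal
      fun y hy => hv y fun g => congrArg Subtype.val (hy g)
    have hσv : primeMap (σ : k ≃ₐ[ℚ] k) v = v0 := by
      ext1
      rw [primeMap_asIdeal, hσ]
      rfl
    refine ⟨hpv, fun hcv => hv0.2 ?_⟩
    rw [← hσv, primeMap_comm (AlgEquiv.commute_of_apply_eq_conj hc σ), hcv]

/-- With `G = ⟨H, c⟩` permuting `T` transitively, `k'` the fixed field of `G`
and `𝔭'_0 = 𝔭_0 ∩ k'` for a fixed `𝔭_0 ∈ T`, the set `T` is exactly the set of primes of `k`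
lying above `𝔭'_0` (i.e. having the same intersection with `k'` as `𝔭_0`). -/
theorem statement14 (k : Type*) [Field k] [NumberField k] (hk : _root_.IsCMField k)
    (c : k ≃ₐ[ℚ] k) (hc : ∀ (φ : k →+* ℂ) (y : k), φ (c y) = (starRingEnd ℂ) (φ y))
    (p : ℕ) (hp : p.Prime)
    (H : Subgroup (k ≃ₐ[ℚ] k)) (hcH : c ∉ H)
    (htrans : ∀ v w : HeightOneSpectrum (𝓞 k),
        ((p : 𝓞 k) ∈ v.asIdeal ∧ primeMap c v ≠ v) →
        ((p : 𝓞 k) ∈ w.asIdeal ∧ primeMap c w ≠ w) →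
        ∃ σ ∈ H ⊔ Subgroup.closure {c}, primeMap σ v = w)
    (v0 : HeightOneSpectrum (𝓞 k))
    (hv0 : (p : 𝓞 k) ∈ v0.asIdeal ∧ primeMap c v0 ≠ v0) :
    ∀ v : HeightOneSpectrum (𝓞 k),
      (((p : 𝓞 k) ∈ v.asIdeal ∧ primeMap c v ≠ v) ↔
        (∀ y : 𝓞 k, (y : k) ∈ IntermediateField.fixedField (H ⊔ Subgroup.closure {c}) →
          (y ∈ v.asIdeal ↔ y ∈ v0.asIdeal))) :=
  statement14_general k c hc p H htrans v0 hv0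

end
end
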